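/- For every real x, the Euler polynomial matrix 𝓔(x + 1/2) is invertible and its inverse is [𝓔(x + 1/2)]^{−1} = 𝓓·P[−x]; in particular, the Euler matrix 𝓔 is invertible with 𝓔^{−1} = 𝓓·P[1/2]. -/

import Mathlib

noncomputable section

/-- `Eu x k` is the Euler polynomial `E_k(x)`, characterized by the generating function
`(2/(e^z+1)) e^{xz} = Σ_k E_k(x) z^k / k!` for `|z| < π`. -/
def IsEulerFamily (Eu : ℝ → ℕ → ℝ) : Prop :=
  ∀ x z : ℝ, |z| < Real.pi →
    HasSum (fun k : ℕ => Eu x k * z ^ k / (Nat.factorial k : ℝ))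
      (2 / (Real.exp z + 1) * Real.exp (x * z))

/-- The `(n+1)×(n+1)` Euler polynomial matrix `𝓔(x)`, with `(i,j)` entry
`C(i,j) E_{i-j}(x)` (which is `0` for `j > i` since then `C(i,j) = 0`). -/
def eulerMatrix (Eu : ℝ → ℕ → ℝ) (n : ℕ) (x : ℝ) :
    Matrix (Fin (n + 1)) (Fin (n + 1)) ℝ :=
  Matrix.of fun i j => (Nat.choose (i : ℕ) (j : ℕ) : ℝ) * Eu x ((i : ℕ) - (j : ℕ))

/-- The generalized Pascal matrix of the first kind `P[x]`. -/
def pascalMatrix (n : ℕ) (x : ℝ) : Matrix (Fin (n + 1)) (Fin (n + 1)) ℝ :=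
  Matrix.of fun i j => (Nat.choose (i : ℕ) (j : ℕ) : ℝ) * x ^ ((i : ℕ) - (j : ℕ))

/-- The matrix `𝓓`, with `(i,j)` entry `(1+(-1)^(i-j)) C(i,j) 2^(j-i-1)`
(which is `0` for `j > i` since then `C(i,j) = 0`). -/
def Dmatrix (n : ℕ) : Matrix (Fin (n + 1)) (Fin (n + 1)) ℝ :=
  Matrix.of fun i j =>
    (1 + (-1 : ℝ) ^ ((i : ℤ) - (j : ℤ))) * (Nat.choose (i : ℕ) (j : ℕ) : ℝ) *
      (2 : ℝ) ^ ((j : ℤ) - (i : ℤ) - 1)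

/-!
Every matrix in sight has the form `(C(i,j) a(i-j))_{i,j}` for a sequence `a`, and the product of
two such matrices is the one attached to the binomial convolution of the sequences, whose
exponential generating function is the product of theirs. For `𝓔(x + 1/2)`, `𝓓` and `P[-x]` these
are `e^{xz} / cosh(z/2)`, `cosh(z/2)` and `e^{-xz}`, with product `1 = e^{0z}`, the generating
function of the identity matrix; uniqueness of power series coefficients turns this into the matrix
identity. A one-sided inverse of a square matrix is two-sided, and `x = -1/2` gives `𝓔⁻¹`.
-/

open Finset
open scoped Nat

namespace EulerMatrix

section Binomial

variable {R : Type*} [CommSemiring R]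

def binomialMatrix (m : ℕ) (a : ℕ → R) : Matrix (Fin m) (Fin m) R :=
  Matrix.of fun i j => ((i : ℕ).choose j : R) * a (i - j)

def binomialConv (a b : ℕ → R) (k : ℕ) : R :=
  ∑ p ∈ antidiagonal k, (k.choose p.1 : R) * a p.1 * b p.2

theorem sum_choose_mul_choose_mul (a b : ℕ → R) {i j m : ℕ} (hi : i < m) :
    ∑ k ∈ range m, (i.choose k : R) * a (i - k) * ((k.choose j : R) * b (k - j)) =
      (i.choose j : R) * binomialConv a b (i - j) := by
  rcases lt_or_ge i j with hij | hji
  · rw [Nat.choose_eq_zero_of_lt hij, Nat.cast_zero, zero_mul]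
    refine sum_eq_zero fun k _ => ?_
    rcases lt_or_ge i k with hik | hki
    · simp [Nat.choose_eq_zero_of_lt hik]
    · simp [Nat.choose_eq_zero_of_lt (hki.trans_lt hij)]
  have hsub : Icc j i ⊆ range m := fun k hk => by
    simp only [mem_Icc, mem_range] at hk ⊢; omega
  rw [← sum_subset hsub fun k _ hk => ?vanish, binomialConv, mul_sum]
  case vanish =>
    simp only [mem_Icc, not_and_or, not_le] at hk
    rcases hk with hk | hk <;> simp [Nat.choose_eq_zero_of_lt hk]
  refine sum_nbij' (fun k => (i - k, k - j)) (fun p => j + p.2) ?_ ?_ ?_ ?_ fun k hk => ?_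
  · intro k hk
    simp only [mem_Icc, HasAntidiagonal.mem_antidiagonal] at hk ⊢; omega
  · intro p hp
    simp only [mem_Icc, HasAntidiagonal.mem_antidiagonal] at hp ⊢; omega
  · intro k hk; simp only [mem_Icc] at hk; omega
  · intro p hp
    simp only [HasAntidiagonal.mem_antidiagonal] at hp
    ext <;> dsimp only <;> omega
  simp only [mem_Icc] at hk
  have hchoose : (i.choose k : R) * k.choose j = i.choose j * (i - j).choose (i - k) := by
    rw [Nat.choose_symm_of_eq_add (by omega : i - j = i - k + (k - j))]
    exact_mod_cast congrArg (Nat.cast (R := R)) (Nat.choose_mul (n := i) hk.1)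
  calc (i.choose k : R) * a (i - k) * ((k.choose j : R) * b (k - j))
      = (i.choose k * k.choose j : R) * (a (i - k) * b (k - j)) := by ring
    _ = _ := by rw [hchoose]; ring

theorem binomialMatrix_mul (m : ℕ) (a b : ℕ → R) :
    binomialMatrix m a * binomialMatrix m b = binomialMatrix m (binomialConv a b) := by
  ext i j
  simp only [binomialMatrix, Matrix.mul_apply, Matrix.of_apply]
  rw [Fin.sum_univ_eq_sum_range
    (fun k => ((i : ℕ).choose k : R) * a (i - k) * ((k.choose j : R) * b (k - j)))]
  exact sum_choose_mul_choose_mul a b i.isLt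

theorem binomialMatrix_zero_pow (m : ℕ) : binomialMatrix m (fun k => (0 : R) ^ k) = 1 := by
  ext i j
  rcases lt_trichotomy (i : ℕ) j with h | h | h
  · simp [binomialMatrix, Nat.choose_eq_zero_of_lt h, Fin.ne_of_lt h]
  · obtain rfl := Fin.ext h
    simp [binomialMatrix]
  · simp [binomialMatrix, (Fin.ne_of_lt h).symm, Nat.sub_ne_zero_of_lt h]

end Binomial

open Real

theorem eq_zero_of_hasSum_mul_pow {q : ℕ → ℝ} {r : ℝ} (hr : 0 < r)
    (h : ∀ z, |z| < r → HasSum (fun k => q k * z ^ k) 0) : q = 0 := by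
  obtain ⟨ρ, hρ0, hρr⟩ : ∃ ρ : NNReal, 0 < ρ ∧ (ρ : ℝ) < r :=
    ⟨(r / 2).toNNReal, by simpa using hr, by rw [Real.coe_toNNReal _ (by positivity)]; linarith⟩
  set p := FormalMultilinearSeries.ofScalars ℝ q
  have hball : HasFPowerSeriesOnBall 0 p 0 ρ := by
    refine ⟨p.le_radius_of_summable_norm ?_, by simpa using hρ0, fun {y} hy => ?_⟩
    · simpa [p, FormalMultilinearSeries.ofScalars_norm] using
        (h ρ (by rwa [NNReal.abs_eq])).summable.norm
    · rw [Metric.eball_coe, mem_ball_zero_iff] at hy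
      simpa [p, FormalMultilinearSeries.ofScalars_apply_eq, mul_comm] using h y (hy.trans hρr)
  exact (FormalMultilinearSeries.ofScalars_series_eq_zero ℝ).mp hball.hasFPowerSeriesAt.eq_zero

def HasEGFOn (a : ℕ → ℝ) (F : ℝ → ℝ) (r : ℝ) : Prop :=
  ∀ z, |z| < r → HasSum (fun k => a k * z ^ k / k !) (F z)

theorem HasEGFOn.unique {a b : ℕ → ℝ} {F : ℝ → ℝ} {r : ℝ} (hr : 0 < r)
    (ha : HasEGFOn a F r) (hb : HasEGFOn b F r) : a = b := by
  have hdiff : (fun k => (a k - b k) / k !) = 0 := by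
    refine eq_zero_of_hasSum_mul_pow hr fun z hz => ?_
    simpa [sub_div, sub_mul, div_mul_eq_mul_div] using (ha z hz).sub (hb z hz)
  funext k
  simpa [sub_eq_zero, Nat.factorial_ne_zero] using congrFun hdiff k

theorem hasEGFOn_pow (c r : ℝ) : HasEGFOn (fun k => c ^ k) (fun z => exp (c * z)) r :=
  fun z _ => by
    simpa [Real.exp_eq_exp_ℝ, mul_pow] using NormedSpace.expSeries_div_hasSum_exp (c * z)

theorem HasEGFOn.binomialConv {a b : ℕ → ℝ} {F G : ℝ → ℝ} {r : ℝ}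
    (ha : HasEGFOn a F r) (hb : HasEGFOn b G r) :
    HasEGFOn (binomialConv a b) (F * G) r := by
  intro z hz
  set f := fun k => a k * z ^ k / (k ! : ℝ)
  set g := fun k => b k * z ^ k / (k ! : ℝ)
  have hf := (ha z hz).summable
  have hg := (hb z hz).summable
  have hprod : HasSum (fun n => ∑ p ∈ antidiagonal n, f p.1 * g p.2) (F z * G z) := by
    rw [← (ha z hz).tsum_eq, ← (hb z hz).tsum_eq,
      tsum_mul_tsum_eq_tsum_sum_antidiagonal_of_summable_norm hf.norm hg.norm]
    exact (summable_sum_mul_antidiagonal_of_summable_norm' hf.norm hf hg.norm hg).hasSum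
  refine hprod.congr_fun fun n => ?_
  rw [EulerMatrix.binomialConv, sum_mul, sum_div]
  refine sum_congr rfl fun p hp => ?_
  rw [HasAntidiagonal.mem_antidiagonal] at hp
  subst hp
  have hfact : ((p.1 + p.2).choose p.1 * p.1 ! * p.2 ! : ℝ) = (p.1 + p.2)! := by
    rw [add_comm p.1 p.2, ← Nat.add_choose_mul_factorial_mul_factorial p.2 p.1]
    push_cast
    ring
  have hC : ((p.1 + p.2).choose p.1 : ℝ) ≠ 0 := by
    exact_mod_cast (Nat.choose_pos (Nat.le_add_right _ _)).ne'
  simp only [f, g, pow_add, ← hfact]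
  field_simp

theorem hasEGFOn_cosh_half (r : ℝ) :
    HasEGFOn (fun k => ((1 / 2) ^ k + (-1 / 2) ^ k) / 2) (fun z => cosh (z / 2)) r :=
  fun z hz => by
    have hsum := ((hasEGFOn_pow (1 / 2) r z hz).add (hasEGFOn_pow (-1 / 2) r z hz)).div_const 2
    show HasSum _ (cosh (z / 2))
    rw [show cosh (z / 2) = (exp (1 / 2 * z) + exp (-1 / 2 * z)) / 2 by rw [cosh_eq]; ring_nf]
    exact hsum.congr_fun fun k => by ring

theorem Dmatrix_eq_binomialMatrix (n : ℕ) :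
    Dmatrix n = binomialMatrix (n + 1) fun k => ((1 / 2) ^ k + (-1 / 2) ^ k) / 2 := by
  ext i j
  simp only [Dmatrix, binomialMatrix, Matrix.of_apply]
  rcases lt_or_ge (i : ℕ) j with h | h
  · simp [Nat.choose_eq_zero_of_lt h]
  obtain ⟨d, hd⟩ := Nat.exists_eq_add_of_le h
  have hij : (i : ℤ) - j = d := by omega
  have hji : (j : ℤ) - i - 1 = -(d + 1 : ℕ) := by omega
  rw [hij, hji, hd, Nat.add_sub_cancel_left, zpow_natCast, zpow_neg, zpow_natCast, div_pow, div_pow,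
    one_pow, pow_succ]
  field_simp

theorem euler_egf_mul_cosh_half_mul_exp (x z : ℝ) :
    2 / (exp z + 1) * exp ((x + 1 / 2) * z) * (cosh (z / 2) * exp (-x * z)) = exp (0 * z) := by
  have hsplit : exp ((x + 1 / 2) * z) = exp (x * z) * exp (z / 2) := by
    rw [← exp_add]; ring_nf
  have hz : exp z = exp (z / 2) ^ 2 := by rw [← exp_nat_mul]; ring_nf
  rw [hsplit, hz, cosh_eq, exp_neg, neg_mul, exp_neg, zero_mul, exp_zero]
  field_simp

theorem eulerMatrix_add_half_mul_Dmatrix_mul_pascalMatrix {Eu : ℝ → ℕ → ℝ}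
    (hEu : IsEulerFamily Eu) (n : ℕ) (x : ℝ) :
    eulerMatrix Eu n (x + 1 / 2) * (Dmatrix n * pascalMatrix n (-x)) = 1 := by
  have hconv : binomialConv (Eu (x + 1 / 2))
      (binomialConv (fun k => ((1 / 2) ^ k + (-1 / 2) ^ k) / 2) fun k => (-x) ^ k) =
      fun k => (0 : ℝ) ^ k := by
    have hEuler : HasEGFOn (Eu (x + 1 / 2))
        (fun z => 2 / (exp z + 1) * exp ((x + 1 / 2) * z)) π := hEu (x + 1 / 2)
    refine HasEGFOn.unique pi_pos ?_ (hasEGFOn_pow 0 π)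
    convert hEuler.binomialConv ((hasEGFOn_cosh_half π).binomialConv (hasEGFOn_pow (-x) π))
      using 1
    exact funext fun z => (euler_egf_mul_cosh_half_mul_exp x z).symm
  rw [Dmatrix_eq_binomialMatrix]
  change binomialMatrix _ (Eu (x + 1 / 2)) * (binomialMatrix _ _ * binomialMatrix _ _) = 1
  rw [binomialMatrix_mul, binomialMatrix_mul, hconv, binomialMatrix_zero_pow]

end EulerMatrix

theorem euler_poly_matrix_inverse (Eu : ℝ → ℕ → ℝ) (hEu : IsEulerFamily Eu)
    (n : ℕ) (x : ℝ) :
    (eulerMatrix Eu n (x + 1 / 2) * (Dmatrix n * pascalMatrix n (-x)) = 1 ∧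
     (Dmatrix n * pascalMatrix n (-x)) * eulerMatrix Eu n (x + 1 / 2) = 1) ∧
    (eulerMatrix Eu n 0 * (Dmatrix n * pascalMatrix n (1 / 2)) = 1 ∧
     (Dmatrix n * pascalMatrix n (1 / 2)) * eulerMatrix Eu n 0 = 1) := by
  have hx := EulerMatrix.eulerMatrix_add_half_mul_Dmatrix_mul_pascalMatrix hEu n x
  have h0 := EulerMatrix.eulerMatrix_add_half_mul_Dmatrix_mul_pascalMatrix hEu n (-(1 / 2))
  rw [neg_add_cancel, neg_neg] at h0
  exact ⟨⟨hx, mul_eq_one_comm.mp hx⟩, h0, mul_eq_one_comm.mp h0⟩
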